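/- Consider the switched quantized control system with parameter α satisfying 1 < α < 3/2 and disturbance rounding error Δ_d with |Δ_d| ≤ 1/2. If at some time k the state satisfies condition (9), then for every integer h > 1 the control state satisfies the algebraic relation ū(k+h) = −α·ρ(e(k+h)). -/

import Mathlib

/-- Sign function: 1 for positive, 0 for zero, -1 for negative. -/
noncomputable def rsign (z : ℝ) : ℤ :=
  if 0 < z then 1 else if z = 0 then 0 else -1

/-- Rounding operator: rounds to the nearest integer, ties away from zero. -/
noncomputable def rho (z : ℝ) : ℤ :=
  if Int.fract |z| < 1/2 then rsign z * ⌊|z|⌋ else rsign z * (⌊|z|⌋ + 1)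

/-- The switched quantized control system with parameter `α` and disturbance
rounding error `Δd`, with state trajectory `(e, u)`. -/
def Traj (α Δd : ℝ) (e u : ℕ → ℝ) : Prop :=
  ∀ k : ℕ,
    e (k+1) = e k + (rho (u k) : ℝ) + Δd ∧
    u (k+1) = if rho (e (k+1)) = 0
      then ((rho (u k) : ℝ) + (rho (e k) : ℝ))
      else (u k + (rho (e k) : ℝ) - α * (rho (e (k+1)) : ℝ))

/-- Condition (9) at time `k`. -/
def Cond9 (α Δd : ℝ) (e u : ℕ → ℝ) (k : ℕ) : Prop :=
  (-(1/2) < e k ∧ e k < 1/2) ∧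
  (1 ≤ α - u k * (rsign Δd : ℝ) ∧ α - u k * (rsign Δd : ℝ) < 3/2) ∧
  (-(1/2) < u k ∧ u k < 1/2)

/-!
When (9) holds at time `k`, both quantized signals vanish there, so `e` just drifts by `Δd`.
Either it stays in `(-1/2, 1/2)` and `u` is reset to `0`, or it is rounded to `sign Δd` and
`u` jumps by `∓α` into the rounding cell of `∓1`, which returns `e` to `(-1/2, 1/2)` and `u`
to `0` one step later. From then on the loop alternates between rest (`ρ(e) = 0`, `u = 0`) and
one-step kicks (`ρ(e) = ±1`, `u = ∓α`), and both regimes satisfy `u = -α ρ(e)`.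
-/

lemma rsign_of_pos {z : ℝ} (hz : 0 < z) : rsign z = 1 := by
  simp [rsign, hz]

lemma rsign_of_neg {z : ℝ} (hz : z < 0) : rsign z = -1 := by
  simp [rsign, hz.not_gt, hz.ne]

lemma rsign_neg (z : ℝ) : rsign (-z) = -rsign z := by
  rcases lt_trichotomy z 0 with hz | rfl | hz
  · rw [rsign_of_neg hz, rsign_of_pos (neg_pos.mpr hz), neg_neg]
  · simp [rsign]
  · rw [rsign_of_pos hz, rsign_of_neg (neg_neg_iff_pos.mpr hz)]

lemma rho_neg (z : ℝ) : rho (-z) = -rho z := by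
  rw [rho, rho, abs_neg, rsign_neg]
  split_ifs <;> ring

lemma rho_eq_round_of_nonneg {z : ℝ} (hz : 0 ≤ z) : rho z = round z := by
  rcases hz.eq_or_lt with rfl | hz
  · simp [rho, rsign]
  rw [rho, abs_of_pos hz, rsign_of_pos hz, one_mul, round_eq, eq_comm, Int.floor_eq_iff]
  have hfract := Int.floor_add_fract z
  split_ifs <;> push_cast <;> constructor <;>
    linarith [Int.fract_nonneg z, Int.fract_lt_one z]

lemma rho_eq_zero_of_abs_lt {z : ℝ} (hz : |z| < 1/2) : rho z = 0 := by
  rcases le_or_gt 0 z with h | h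
  · rw [rho_eq_round_of_nonneg h, round_eq_zero_iff]
    exact ⟨by linarith, (abs_lt.mp hz).2⟩
  · rw [← neg_neg z, rho_neg, rho_eq_round_of_nonneg (by linarith), neg_eq_zero,
      round_eq_zero_iff]
    exact ⟨by linarith, by linarith [(abs_lt.mp hz).1]⟩

lemma rho_eq_one {z : ℝ} (h₁ : 1/2 ≤ z) (h₂ : z < 3/2) : rho z = 1 := by
  rw [rho_eq_round_of_nonneg (by linarith), round_eq_iff]
  constructor <;> push_cast <;> linarith

lemma rho_eq_neg_one {z : ℝ} (h₁ : -(3/2) < z) (h₂ : z ≤ -(1/2)) : rho z = -1 := by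
  rw [← neg_neg z, rho_neg, rho_eq_one (by linarith) (by linarith)]

/-- `Traj α Δd e u` unfolds to `∀ k, Step α Δd (e k) (u k) (e (k+1)) (u (k+1))`. -/
def Step (α Δd e u e' u' : ℝ) : Prop :=
  e' = e + rho u + Δd ∧
    u' = if rho e' = 0 then (rho u + rho e : ℝ) else u + rho e - α * rho e'

section Step

variable {α Δd e u e' u' : ℝ}

lemma Step.rest_or_kick_of_rest (hs : Step α Δd e u e' u') (hΔ : |Δd| ≤ 1/2)
    (he : |e| < 1/2) (hu : |u| < 1/2) :
    (|e'| < 1/2 ∧ u' = 0) ∨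
      (0 < Δd ∧ 1/2 ≤ e' ∧ e' < 1/2 + Δd ∧ u' = u - α) ∨
      (Δd < 0 ∧ -(1/2) + Δd < e' ∧ e' ≤ -(1/2) ∧ u' = u + α) := by
  obtain ⟨he', hu'⟩ := hs
  rw [rho_eq_zero_of_abs_lt he, rho_eq_zero_of_abs_lt hu] at hu'
  rw [rho_eq_zero_of_abs_lt hu] at he'
  obtain ⟨he₁, he₂⟩ := abs_lt.mp he
  obtain ⟨hΔ₁, hΔ₂⟩ := abs_le.mp hΔ
  push_cast at he' hu'
  rcases lt_or_ge e' (1/2) with h₂ | h₂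
  · rcases lt_or_ge (-(1/2)) e' with h₁ | h₁
    · have he'_small : |e'| < 1/2 := abs_lt.mpr ⟨h₁, h₂⟩
      rw [hu', if_pos (rho_eq_zero_of_abs_lt he'_small)]
      exact Or.inl ⟨he'_small, by ring⟩
    · have hρ := rho_eq_neg_one (by linarith) h₁
      rw [hu', hρ, if_neg (by norm_num)]
      exact Or.inr (Or.inr ⟨by linarith, by linarith, h₁, by push_cast; ring⟩)
  · have hρ := rho_eq_one h₂ (by linarith)
    rw [hu', hρ, if_neg (by norm_num)]
    exact Or.inr (Or.inl ⟨by linarith, h₂, by linarith, by push_cast; ring⟩)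

lemma Step.rest_of_kick_up (hs : Step α Δd e u e' u') (hΔ : 0 < Δd) (he₁ : 1/2 ≤ e)
    (he₂ : e < 3/2 - Δd) (hu : rho u = -1) : |e'| < 1/2 ∧ u' = 0 := by
  obtain ⟨he', hu'⟩ := hs
  rw [hu] at he'
  push_cast at he'
  have he'_small : |e'| < 1/2 := abs_lt.mpr ⟨by linarith, by linarith⟩
  rw [hu', if_pos (rho_eq_zero_of_abs_lt he'_small), hu, rho_eq_one he₁ (by linarith)]
  exact ⟨he'_small, by push_cast; ring⟩

lemma Step.rest_of_kick_down (hs : Step α Δd e u e' u') (hΔ : Δd < 0)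
    (he₁ : -(3/2) - Δd < e) (he₂ : e ≤ -(1/2)) (hu : rho u = 1) : |e'| < 1/2 ∧ u' = 0 := by
  obtain ⟨he', hu'⟩ := hs
  rw [hu] at he'
  push_cast at he'
  have he'_small : |e'| < 1/2 := abs_lt.mpr ⟨by linarith, by linarith⟩
  rw [hu', if_pos (rho_eq_zero_of_abs_lt he'_small), hu, rho_eq_neg_one (by linarith) he₂]
  exact ⟨he'_small, by push_cast; ring⟩

end Step

def IsSettled (α Δd e u : ℝ) : Prop :=
  (|e| < 1/2 ∧ u = 0) ∨
    (0 < Δd ∧ 1/2 ≤ e ∧ e < 3/2 - Δd ∧ u = -α) ∨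
    (Δd < 0 ∧ -(3/2) - Δd < e ∧ e ≤ -(1/2) ∧ u = α)

namespace IsSettled

variable {α Δd e u : ℝ}

lemma rest (he : |e| < 1/2) : IsSettled α Δd e 0 := Or.inl ⟨he, rfl⟩

lemma eq_neg_mul_rho (hs : IsSettled α Δd e u) : u = -α * rho e := by
  rcases hs with ⟨he, rfl⟩ | ⟨hΔ, he₁, he₂, rfl⟩ | ⟨hΔ, he₁, he₂, rfl⟩
  · simp [rho_eq_zero_of_abs_lt he]
  · simp [rho_eq_one he₁ (by linarith)]
  · simp [rho_eq_neg_one (by linarith) he₂]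

lemma step (hα₁ : 1/2 ≤ α) (hα₂ : α < 3/2) (hΔ : |Δd| ≤ 1/2)
    (hs : IsSettled α Δd e u) {e' u' : ℝ} (hstep : Step α Δd e u e' u') :
    IsSettled α Δd e' u' := by
  obtain ⟨hΔ₁, hΔ₂⟩ := abs_le.mp hΔ
  rcases hs with ⟨he, rfl⟩ | ⟨hΔpos, he₁, he₂, rfl⟩ | ⟨hΔneg, he₁, he₂, rfl⟩
  · rcases hstep.rest_or_kick_of_rest hΔ he (by norm_num) with
      ⟨he', rfl⟩ | ⟨hΔpos, he₁, he₂, rfl⟩ | ⟨hΔneg, he₁, he₂, rfl⟩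
    · exact rest he'
    · exact Or.inr (Or.inl ⟨hΔpos, he₁, by linarith, zero_sub α⟩)
    · exact Or.inr (Or.inr ⟨hΔneg, by linarith, he₂, zero_add α⟩)
  · have hρ : rho (-α) = -1 := rho_eq_neg_one (by linarith) (by linarith)
    obtain ⟨he', rfl⟩ := hstep.rest_of_kick_up hΔpos he₁ he₂ hρ
    exact rest he'
  · obtain ⟨he', rfl⟩ := hstep.rest_of_kick_down hΔneg he₁ he₂ (rho_eq_one hα₁ hα₂)
    exact rest he'

end IsSettled

lemma isSettled_of_cond9 {α Δd : ℝ} (hα₁ : 1/2 ≤ α) (hα₂ : α < 3/2)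
    (hΔ : |Δd| ≤ 1/2) {e u : ℕ → ℝ} (htraj : Traj α Δd e u) {k : ℕ}
    (h9 : Cond9 α Δd e u k) : IsSettled α Δd (e (k+2)) (u (k+2)) := by
  obtain ⟨he, ⟨hαu₁, hαu₂⟩, hu⟩ := h9
  obtain ⟨hΔ₁, hΔ₂⟩ := abs_le.mp hΔ
  have hstep₁ : Step α Δd (e (k+1)) (u (k+1)) (e (k+2)) (u (k+2)) := htraj (k+1)
  rcases Step.rest_or_kick_of_rest (htraj k) hΔ (abs_lt.mpr he) (abs_lt.mpr hu) with
    ⟨he', hu'⟩ | ⟨hΔpos, he₁, he₂, hu'⟩ | ⟨hΔneg, he₁, he₂, hu'⟩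
  · rw [hu'] at hstep₁
    exact (IsSettled.rest he').step hα₁ hα₂ hΔ hstep₁
  · rw [rsign_of_pos hΔpos, Int.cast_one, mul_one] at hαu₁ hαu₂
    have hρ : rho (u (k+1)) = -1 := rho_eq_neg_one (by linarith) (by linarith)
    obtain ⟨he'', hu''⟩ := hstep₁.rest_of_kick_up hΔpos he₁ (by linarith) hρ
    rw [hu'']
    exact IsSettled.rest he''
  · rw [rsign_of_neg hΔneg, Int.cast_neg, Int.cast_one, mul_neg_one] at hαu₁ hαu₂
    have hρ : rho (u (k+1)) = 1 := rho_eq_one (by linarith) (by linarith)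
    obtain ⟨he'', hu''⟩ := hstep₁.rest_of_kick_down hΔneg (by linarith) he₂ hρ
    rw [hu'']
    exact IsSettled.rest he''

theorem stmt_2 (α Δd : ℝ) (hα : 1 < α ∧ α < 3/2) (hΔ : |Δd| ≤ 1/2)
    (e u : ℕ → ℝ) (htraj : Traj α Δd e u) (k : ℕ) (h9 : Cond9 α Δd e u k) :
    ∀ h : ℕ, 1 < h → u (k+h) = -α * (rho (e (k+h)) : ℝ) := by
  obtain ⟨hα₁, hα₂⟩ := hα
  intro h hh
  have hsettled : IsSettled α Δd (e (k+h)) (u (k+h)) := by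
    induction h, hh using Nat.le_induction with
    | base => exact isSettled_of_cond9 (by linarith) hα₂ hΔ htraj h9
    | succ n _ ih => exact ih.step (by linarith) hα₂ hΔ (htraj (k+n))
  exact hsettled.eq_neg_mul_rho
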